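/- arXiv:2503.21556 — 5 statements merged into one kernel-verified Lean document; each statement's English description precedes it below -/
import Mathlib

section
/- Let V be an FI-module with values in abelian groups. Define H₀(V)(T) = coker(⊕_{S ⊊ T} V(S) → V(T)), the cokernel of the map induced by all the inclusions of proper subsets. Then H₀ is a functor from FI-modules to FB-modules, and H₀ is left adjoint to the extension-by-zero functor α* sending an FB-module W to the FI-module that agrees with W on objects and bijections and sends every non-bijective injection to the zero map. -/
/-!
The images in `V(T)` of all non-bijective injections into `T` span a sub-FI-module, since a
non-bijection stays non-bijective after composing with any injection. This span is the image of
`canMap`, because a non-bijective injection factors through the inclusion of its image, a proper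
subset. A morphism `V ⟶ α* W` kills the span, as `α* W` sends non-bijections to `0`, so it factors
uniquely through the quotient restricted to FB; this natural bijection of hom-sets determines `H₀`
as a left adjoint of `α*`.
-/

open CategoryTheory Limits
open scoped Classical

/-- The category `FI` of finite sets (finite subsets of `ℕ`) and injections. -/
structure FIob where
  s : Finset ℕ

instance : Category FIob where
  Hom A B := {f : ↥A.s → ↥B.s // Function.Injective f}
  id A := ⟨id, fun _ _ h => h⟩
  comp f g := ⟨g.1 ∘ f.1, g.2.comp f.2⟩

/-- The category `FB` of finite sets (finite subsets of `ℕ`) and bijections. -/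
structure FBob where
  s : Finset ℕ

instance : Category FBob where
  Hom A B := {f : ↥A.s → ↥B.s // Function.Bijective f}
  id A := ⟨id, Function.bijective_id⟩
  comp f g := ⟨g.1 ∘ f.1, g.2.comp f.2⟩

/-- Extension by zero of an FB-module: the FI-module agreeing with `W` on objects and
bijections and sending every non-bijective injection to the zero map. -/
noncomputable def alphaStarObj (W : FBob ⥤ AddCommGrpCat) : FIob ⥤ AddCommGrpCat where
  obj T := W.obj ⟨T.s⟩
  map {S T} f := if h : Function.Bijective f.1 then W.map ⟨f.1, h⟩ else 0
  map_id S := by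
    dsimp only
    split
    · exact W.map_id ⟨S.s⟩
    · rename_i h
      exact absurd Function.bijective_id h
  map_comp {S T U} f g := by
    dsimp only
    split
    · rename_i h1
      split
      · rename_i h2
        split
        · rename_i h3
          exact W.map_comp (show (⟨S.s⟩ : FBob) ⟶ ⟨T.s⟩ from ⟨f.1, h2⟩)
            (show (⟨T.s⟩ : FBob) ⟶ ⟨U.s⟩ from ⟨g.1, h3⟩)
        · rename_i h3
          exact absurd ⟨g.2, Function.Surjective.of_comp
            (show Function.Surjective (g.1 ∘ f.1) from h1.surjective)⟩ h3
      · rename_i h2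
        refine absurd ⟨f.2, fun b => ?_⟩ h2
        obtain ⟨a, ha⟩ := h1.surjective (g.1 b)
        exact ⟨a, g.2 ha⟩
    · rename_i h1
      split
      · rename_i h2
        split
        · rename_i h3
          exact absurd (h3.comp h2) h1
        · rw [comp_zero]
      · rw [zero_comp]

/-- The extension-by-zero functor `α* : FB-Mod → FI-Mod`. -/
noncomputable def alphaStar : (FBob ⥤ AddCommGrpCat) ⥤ (FIob ⥤ AddCommGrpCat) where
  obj := alphaStarObj
  map {W W'} η :=
    { app := fun T => η.app ⟨T.s⟩
      naturality := by
        intro S T f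
        dsimp [alphaStarObj]
        by_cases h : Function.Bijective f.1
        · rw [dif_pos h, dif_pos h]
          exact η.naturality (show (⟨S.s⟩ : FBob) ⟶ ⟨T.s⟩ from ⟨f.1, h⟩)
        · rw [dif_neg h, dif_neg h, zero_comp, comp_zero] }
  map_id W := by
    ext T
    rfl
  map_comp {W W' W''} η θ := by
    ext T
    rfl

/-- The canonical map `⊕_{S ⊊ T} V(S) → V(T)` induced by the inclusions of proper
subsets. -/
noncomputable def canMap (V : FIob ⥤ AddCommGrpCat) (B : FBob) :
    AddCommGrpCat.of (DirectSum {S : Finset ℕ // S ⊂ B.s} (fun S => (V.obj ⟨S.1⟩ : Type)))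
      ⟶ V.obj ⟨B.s⟩ :=
  AddCommGrpCat.ofHom (DirectSum.toAddMonoid fun S =>
    (V.map ⟨fun x => ⟨x.1, S.2.subset x.2⟩, fun a b hab => by cases a; cases b; simpa using hab⟩).hom)

namespace FIob

def ofSubset {S T : Finset ℕ} (h : S ⊆ T) : (⟨S⟩ : FIob) ⟶ ⟨T⟩ :=
  ⟨fun x => ⟨x.1, h x.2⟩, fun _ _ hab => Subtype.ext (congrArg Subtype.val hab :)⟩

theorem not_bijective_ofSubset {S T : Finset ℕ} (h : S ⊂ T) :
    ¬ Function.Bijective (ofSubset h.subset).1 := by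
  obtain ⟨t, htT, htS⟩ := Finset.exists_of_ssubset h
  rintro ⟨-, hsurj⟩
  obtain ⟨s, hs⟩ := hsurj ⟨t, htT⟩
  exact htS (congrArg Subtype.val hs ▸ s.2 :)

theorem exists_eq_comp_ofSubset {A : FIob} {T : Finset ℕ} (g : A ⟶ ⟨T⟩)
    (hg : ¬ Function.Bijective g.1) :
    ∃ (S : Finset ℕ) (h : S ⊂ T) (e : A ⟶ ⟨S⟩), g = e ≫ ofSubset h.subset := by
  let S := A.s.attach.image fun a => (g.1 a : ℕ)
  have hS a : (g.1 a : ℕ) ∈ S := Finset.mem_image_of_mem _ (Finset.mem_attach _ a)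
  have hST : S ⊆ T := by
    intro n hn
    obtain ⟨a, -, rfl⟩ := Finset.mem_image.1 hn
    exact (g.1 a).2
  have hTS : ¬ T ⊆ S := fun hTS => hg ⟨g.2, fun t => by
    obtain ⟨a, -, ha⟩ := Finset.mem_image.1 (hTS t.2)
    exact ⟨a, Subtype.ext ha⟩⟩
  refine ⟨S, ⟨hST, hTS⟩, ⟨fun a => ⟨g.1 a, hS a⟩, fun a b hab => ?_⟩, rfl⟩
  exact g.2 (Subtype.ext (congrArg Subtype.val hab :))

theorem not_bijective_comp {A T T' : FIob} {g : A ⟶ T} (f : T ⟶ T')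
    (hg : ¬ Function.Bijective g.1) : ¬ Function.Bijective (g ≫ f).1 := fun h =>
  hg ((Function.Bijective.of_comp_iff' ⟨f.2, .of_comp h.surjective⟩ g.1).1 h)

end FIob

def FBob.toFI : FBob ⥤ FIob where
  obj B := ⟨B.s⟩
  map f := ⟨f.1, f.2.injective⟩

theorem alphaStar_obj_map_of_not_bijective (W : FBob ⥤ AddCommGrpCat) {S T : FIob} (f : S ⟶ T)
    (hf : ¬ Function.Bijective f.1) : (alphaStar.obj W).map f = 0 :=
  dif_neg hf

theorem alphaStar_obj_map_of_bijective (W : FBob ⥤ AddCommGrpCat) {S T : FIob} (f : S ⟶ T)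
    (hf : Function.Bijective f.1) :
    (alphaStar.obj W).map f = W.map (⟨f.1, hf⟩ : (⟨S.s⟩ : FBob) ⟶ ⟨T.s⟩) :=
  dif_pos hf

section NonBij

variable (V : FIob ⥤ AddCommGrpCat)

noncomputable def nonBijSpan (T : FIob) : AddSubgroup (V.obj T) :=
  ⨆ p : Σ A : FIob, {g : A ⟶ T // ¬ Function.Bijective g.1}, (V.map p.2.1).hom.range

variable {V}

theorem map_mem_nonBijSpan {A T : FIob} (g : A ⟶ T) (hg : ¬ Function.Bijective g.1)
    (x : V.obj A) :
    V.map g x ∈ nonBijSpan V T :=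
  AddSubgroup.mem_iSup_of_mem ⟨A, g, hg⟩ ⟨x, rfl⟩

theorem nonBijSpan_le {T : FIob} {K : AddSubgroup (V.obj T)}
    (h : ∀ (A : FIob) (g : A ⟶ T), ¬ Function.Bijective g.1 → ∀ x, V.map g x ∈ K) :
    nonBijSpan V T ≤ K :=
  iSup_le fun p => by rintro _ ⟨x, rfl⟩; exact h p.1 p.2.1 p.2.2 x

theorem nonBijSpan_le_comap {T T' : FIob} (f : T ⟶ T') :
    nonBijSpan V T ≤ (nonBijSpan V T').comap (V.map f).hom :=
  nonBijSpan_le fun A g hg x => by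
    simpa using map_mem_nonBijSpan (g ≫ f) (FIob.not_bijective_comp f hg) x

theorem nonBijSpan_le_ker {W : FBob ⥤ AddCommGrpCat} (ε : V ⟶ alphaStar.obj W) (T : FIob) :
    nonBijSpan V T ≤ (ε.app T).hom.ker :=
  nonBijSpan_le fun A g hg x => by
    simp [← ConcreteCategory.comp_apply, ε.naturality, alphaStar_obj_map_of_not_bijective W g hg]

theorem canMap_of (B : FBob) (S : {S : Finset ℕ // S ⊂ B.s}) (x : V.obj ⟨S.1⟩) :
    canMap V B (DirectSum.of (fun S : {S : Finset ℕ // S ⊂ B.s} => (V.obj ⟨S.1⟩ : Type)) S x) =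
      V.map (FIob.ofSubset S.2.subset) x :=
  DirectSum.toAddMonoid_of _ _ _

theorem nonBijSpan_eq_range_canMap (B : FBob) :
    nonBijSpan V ⟨B.s⟩ = (canMap V B).hom.range := by
  apply le_antisymm
  · refine nonBijSpan_le fun A g hg x => ?_
    obtain ⟨S, hS, e, rfl⟩ := FIob.exists_eq_comp_ofSubset g hg
    refine ⟨DirectSum.of (fun S : {S : Finset ℕ // S ⊂ B.s} => (V.obj ⟨S.1⟩ : Type)) ⟨S, hS⟩
      (V.map e x), ?_⟩
    rw [canMap_of, V.map_comp, ConcreteCategory.comp_apply]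
  · rintro _ ⟨y, rfl⟩
    induction y using DirectSum.induction_on with
    | zero => simp
    | of S x =>
      rw [canMap_of]
      exact map_mem_nonBijSpan _ (FIob.not_bijective_ofSubset S.2) x
    | add y z hy hz => simpa using add_mem hy hz

end NonBij

section Quotient

variable (V : FIob ⥤ AddCommGrpCat)

noncomputable def nonBijQuotient : FIob ⥤ AddCommGrpCat where
  obj T := .of (V.obj T ⧸ nonBijSpan V T)
  map f := AddCommGrpCat.ofHom (QuotientAddGroup.map _ _ (V.map f).hom (nonBijSpan_le_comap f))
  map_id T := by
    ext x
    simp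
  map_comp f g := by
    ext x
    simp

noncomputable def toNonBijQuotient : V ⟶ nonBijQuotient V where
  app T := AddCommGrpCat.ofHom (QuotientAddGroup.mk' _)

end Quotient

noncomputable def H0HomEquiv (V : FIob ⥤ AddCommGrpCat) (W : FBob ⥤ AddCommGrpCat) :
    (FBob.toFI ⋙ nonBijQuotient V ⟶ W) ≃ (V ⟶ alphaStar.obj W) where
  toFun η :=
    { app T := (toNonBijQuotient V).app T ≫ η.app ⟨T.s⟩
      naturality S T f := by
        by_cases hf : Function.Bijective f.1
        · ext x
          have hη := ConcreteCategory.congr_hom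
            (η.naturality (⟨f.1, hf⟩ : (⟨S.s⟩ : FBob) ⟶ ⟨T.s⟩)) (QuotientAddGroup.mk x)
          rw [alphaStar_obj_map_of_bijective W f hf]
          exact hη
        · rw [alphaStar_obj_map_of_not_bijective W f hf, comp_zero]
          ext x
          change η.app ⟨T.s⟩ (QuotientAddGroup.mk (V.map f x) : V.obj T ⧸ nonBijSpan V T) = 0
          rw [(QuotientAddGroup.eq_zero_iff _).2 (map_mem_nonBijSpan f hf x)]
          exact map_zero (η.app _).hom }
  invFun ε :=
    { app B := AddCommGrpCat.ofHom (QuotientAddGroup.lift _ (ε.app (FBob.toFI.obj B)).hom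
        (nonBijSpan_le_ker ε _))
      naturality B B' f := by
        ext x
        induction x using QuotientAddGroup.induction_on with | H x => ?_
        have := ConcreteCategory.congr_hom (ε.naturality (FBob.toFI.map f)) x
        rw [alphaStar_obj_map_of_bijective W _ f.2] at this
        exact this }
  left_inv η := by
    ext B x
    induction x using QuotientAddGroup.induction_on
    rfl
  right_inv ε := rfl

noncomputable def H0 : (FIob ⥤ AddCommGrpCat) ⥤ (FBob ⥤ AddCommGrpCat) :=
  Adjunction.leftAdjointOfEquiv H0HomEquiv fun _ _ _ _ _ => rfl

noncomputable def H0Adjunction : H0 ⊣ alphaStar :=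
  Adjunction.adjunctionOfEquivLeft _ _

noncomputable def H0IsoCokernel (V : FIob ⥤ AddCommGrpCat) (B : FBob) :
    (H0.obj V).obj B ≅ cokernel (canMap V B) :=
  (QuotientAddGroup.quotientAddEquivOfEq (nonBijSpan_eq_range_canMap B)).toAddCommGrpIso ≪≫
    (AddCommGrpCat.cokernelIsoQuotient _).symm

/-- `H₀(V)(T) = coker(⊕_{S ⊊ T} V(S) → V(T))` defines a functor `H₀` from FI-modules
to FB-modules, and `H₀` is left adjoint to the extension-by-zero functor `α*`. -/
theorem stmt1 :
    ∃ H0 : (FIob ⥤ AddCommGrpCat) ⥤ (FBob ⥤ AddCommGrpCat),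
      Nonempty (H0 ⊣ alphaStar) ∧
      ∀ (V : FIob ⥤ AddCommGrpCat) (B : FBob),
        Nonempty ((H0.obj V).obj B ≅ cokernel (canMap V B)) :=
  ⟨H0, ⟨H0Adjunction⟩, fun V B => ⟨H0IsoCokernel V B⟩⟩
end

section
/- Let V be an FI-module with values in abelian groups and let N ≥ 0 be such that H₀(V)(T) = 0 and H₁(V)(T) = 0 for every finite set T with |T| > N (where H₁ is the first left derived functor of H₀; equivalently, assume for all |T| > N that the natural map colim_{S ⊊ T} V(S) → V(T) is an isomorphism). Then for every finite set T with |T| ≥ N, the natural map colim_{S ⊆ T, |S| ≤ N} V(S) → V(T) is an isomorphism. -/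
open CategoryTheory Limits

/-- The poset of proper subsets of `T`, viewed inside `FI`. -/
def properFunctor (T : Finset ℕ) : {S : Finset ℕ // S ⊂ T} ⥤ FIob where
  obj S := ⟨S.1⟩
  map {S S'} h :=
    ⟨fun x => ⟨x.1, (show S.1 ⊆ S'.1 from leOfHom h) x.2⟩,
      fun a b hab => by cases a; cases b; simpa using hab⟩

/-- The poset of subsets of `T` of cardinality at most `N`, viewed inside `FI`. -/
def smallFunctor (T : Finset ℕ) (N : ℕ) : {S : Finset ℕ // S ⊆ T ∧ S.card ≤ N} ⥤ FIob where
  obj S := ⟨S.1⟩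
  map {S S'} h :=
    ⟨fun x => ⟨x.1, (show S.1 ⊆ S'.1 from leOfHom h) x.2⟩,
      fun a b hab => by cases a; cases b; simpa using hab⟩

/-- The canonical cocone on `S ↦ V(S)`, `S ⊊ T`, with apex `V(T)`, whose legs are
induced by the inclusions `S ⊆ T`. -/
def coconeProper (V : FIob ⥤ AddCommGrpCat) (T : Finset ℕ) :
    Cocone (properFunctor T ⋙ V) where
  pt := V.obj ⟨T⟩
  ι :=
    { app := fun S => V.map
        ⟨fun x => ⟨x.1, S.2.subset x.2⟩, fun a b hab => by cases a; cases b; simpa using hab⟩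
      naturality := by
        intro S S' h
        dsimp
        rw [Category.comp_id, ← V.map_comp]
        rfl }

/-- The canonical cocone on `S ↦ V(S)`, for `S ⊆ T` with `|S| ≤ N`, with apex `V(T)`. -/
def coconeSmall (V : FIob ⥤ AddCommGrpCat) (T : Finset ℕ) (N : ℕ) :
    Cocone (smallFunctor T N ⋙ V) where
  pt := V.obj ⟨T⟩
  ι :=
    { app := fun S => V.map
        ⟨fun x => ⟨x.1, S.2.1 x.2⟩, fun a b hab => by cases a; cases b; simpa using hab⟩
      naturality := by
        intro S S' h
        dsimp
        rw [Category.comp_id, ← V.map_comp]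
        rfl }

/-!
Induction on `|T|`. If `|T| ≤ N`, then `T` is the largest object of the indexing poset and there
is nothing to prove. If `|T| > N`, then every subset of `T` of size at most `N` is proper, so a
cocone `c` on `S ↦ V(S)`, `|S| ≤ N`, restricts for each `S ⊊ T` to the corresponding cocone for
`S`; by induction it factors uniquely through `V(S)`. These factorizations form a cocone over the
proper subsets of `T`, which factors uniquely through `V(T)` by hypothesis.
-/

namespace FIob

def incl {A B : Finset ℕ} (h : A ⊆ B) : FIob.mk A ⟶ FIob.mk B :=
  ⟨fun x => ⟨x.1, h x.2⟩, fun a b hab => by cases a; cases b; simpa using hab⟩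

@[simp]
lemma incl_refl (A : Finset ℕ) : incl (subset_refl A) = 𝟙 (FIob.mk A) := rfl

end FIob

open FIob

variable (V : FIob ⥤ AddCommGrpCat) {N : ℕ} {T : Finset ℕ}

lemma coconeSmall_ι_app (S : {S : Finset ℕ // S ⊆ T ∧ S.card ≤ N}) :
    (coconeSmall V T N).ι.app S = V.map (incl S.2.1) := rfl

def isColimitCoconeSmallOfCardLe (h : T.card ≤ N) : IsColimit (coconeSmall V T N) where
  desc c := c.ι.app ⟨T, subset_refl T, h⟩
  fac c S := c.w (homOfLE (show S ≤ ⟨T, subset_refl T, h⟩ from S.2.1))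
  uniq c m hm := by
    have h := hm ⟨T, subset_refl T, h⟩
    rw [coconeSmall_ι_app, incl_refl, V.map_id] at h
    exact (Category.id_comp m).symm.trans h

variable {V}

def restrictCoconeSmall (c : Cocone (smallFunctor T N ⋙ V)) {S : Finset ℕ} (hS : S ⊆ T) :
    Cocone (smallFunctor S N ⋙ V) where
  pt := c.pt
  ι.app R := c.ι.app ⟨R.1, R.2.1.trans hS, R.2.2⟩
  ι.naturality R R' f :=
    (c.w (j' := ⟨R.1, R.2.1.trans hS, R.2.2⟩) (j := ⟨R'.1, R'.2.1.trans hS, R'.2.2⟩)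
      (homOfLE (leOfHom f))).trans (Category.comp_id _).symm

section InductiveStep

variable (hS : ∀ S : {S : Finset ℕ // S ⊂ T}, IsColimit (coconeSmall V S.1 N))

noncomputable def coconeProperOfCoconeSmall (c : Cocone (smallFunctor T N ⋙ V)) :
    Cocone (properFunctor T ⋙ V) where
  pt := c.pt
  ι.app S := (hS S).desc (restrictCoconeSmall c S.2.subset)
  ι.naturality S S' f := (hS S).hom_ext fun R =>
    have hRS' : R.1 ⊆ S'.1 := R.2.1.trans (leOfHom f)
    ((V.map_comp_assoc _ _ _).symm.trans ((hS S').fac _ ⟨R.1, hRS', R.2.2⟩)).trans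
      (((hS S).fac (restrictCoconeSmall c S.2.subset) R).symm.trans (Category.comp_id _).symm)

noncomputable def isColimitCoconeSmallOfCardLt (hT : IsColimit (coconeProper V T))
    (hNT : N < T.card) : IsColimit (coconeSmall V T N) where
  desc c := hT.desc (coconeProperOfCoconeSmall hS c)
  fac c S := by
    have hST : S.1 ⊂ T :=
      S.2.1.ssubset_of_ne (ne_of_apply_ne Finset.card (S.2.2.trans_lt hNT).ne)
    refine (hT.fac (coconeProperOfCoconeSmall hS c) ⟨S.1, hST⟩).trans ?_
    have h := (hS ⟨S.1, hST⟩).fac (restrictCoconeSmall c hST.subset)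
      ⟨S.1, subset_refl _, S.2.2⟩
    rw [coconeSmall_ι_app, incl_refl, V.map_id] at h
    exact (Category.id_comp _).symm.trans h
  uniq c m hm := hT.hom_ext fun S => (hS S).hom_ext fun R =>
    have hRT : R.1 ⊆ T := R.2.1.trans S.2.subset
    ((V.map_comp_assoc _ _ _).symm.trans (hm ⟨R.1, hRT, R.2.2⟩)).trans
      (((hS S).fac (restrictCoconeSmall c S.2.subset) R).symm.trans
        (congrArg _ (hT.fac (coconeProperOfCoconeSmall hS c) S).symm))

end InductiveStep

theorem stmt5_general (V : FIob ⥤ AddCommGrpCat) (N : ℕ)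
    (hyp : ∀ T : Finset ℕ, N < T.card → Nonempty (IsColimit (coconeProper V T)))
    (T : Finset ℕ) :
    Nonempty (IsColimit (coconeSmall V T N)) := by
  induction T using Finset.strongInduction with
  | H T ih =>
    rcases le_or_gt T.card N with hle | hlt
    · exact ⟨isColimitCoconeSmallOfCardLe V hle⟩
    · exact ⟨isColimitCoconeSmallOfCardLt (fun S => (ih S.1 S.2).some) (hyp T hlt).some hlt⟩

/-- Let `V` be an FI-module (over `ℤ`) and `N ≥ 0` such that for every finite set `T`
with `|T| > N` the natural map `colim_{S ⊊ T} V(S) → V(T)` is an isomorphism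
(equivalently, `H₀(V)` and `H₁(V)` vanish on sets of cardinality `> N`).  Then for
every finite set `T` with `|T| ≥ N`, the natural map
`colim_{S ⊆ T, |S| ≤ N} V(S) → V(T)` is an isomorphism. -/
theorem stmt5 (V : FIob ⥤ AddCommGrpCat) (N : ℕ)
    (hyp : ∀ T : Finset ℕ, N < T.card → Nonempty (IsColimit (coconeProper V T)))
    (T : Finset ℕ) (hT : N ≤ T.card) :
    Nonempty (IsColimit (coconeSmall V T N)) :=
  stmt5_general V N hyp T
end

section
/- Let n ≥ 1 and consider a partition {T_α} of the set {1,…,n} into t nonempty blocks, of which s are singletons. Define k_α = u+1 if |T_α| = 1 and k_α = (|T_α|−1)(d−2)+1 if |T_α| ≥ 2, where d ≥ 3 and u ≥ 0 are integers. Then Σ_α k_α ≥ n(d−1)/2 + s(u+1 − (d−1)/2). Consequently Σ_α k_α ≥ n(d−1)/2 when u+1 ≥ (d−1)/2, and Σ_α k_α ≥ n(u+1) when u+1 < (d−1)/2. -/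
open Finset

/-- Let `{T_α}` be a partition of `{1,…,n}` (`n ≥ 1`) with `s` singleton blocks, and set
`k_α = u + 1` if `|T_α| = 1` and `k_α = (|T_α| - 1)(d - 2) + 1` if `|T_α| ≥ 2`,
where `d ≥ 3`, `u ≥ 0` are integers. Then
`Σ_α k_α ≥ n(d-1)/2 + s(u + 1 - (d-1)/2)`; consequently `Σ_α k_α ≥ n(d-1)/2`
when `u + 1 ≥ (d-1)/2`, and `Σ_α k_α ≥ n(u+1)` when `u + 1 < (d-1)/2`. -/
theorem stmt6 (n : ℕ) (hn : 1 ≤ n)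
    (P : Finpartition (Finset.univ : Finset (Fin n)))
    (d u : ℤ) (hd : 3 ≤ d) (hu : 0 ≤ u)
    (s : ℕ) (hs : s = (P.parts.filter fun B => B.card = 1).card) :
    ((n : ℚ) * ((d : ℚ) - 1) / 2 + (s : ℚ) * ((u : ℚ) + 1 - ((d : ℚ) - 1) / 2)
        ≤ ∑ B ∈ P.parts,
            (if B.card = 1 then (u : ℚ) + 1 else ((B.card : ℚ) - 1) * ((d : ℚ) - 2) + 1))
    ∧ (((d : ℚ) - 1) / 2 ≤ (u : ℚ) + 1 →
        (n : ℚ) * ((d : ℚ) - 1) / 2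
          ≤ ∑ B ∈ P.parts,
              (if B.card = 1 then (u : ℚ) + 1 else ((B.card : ℚ) - 1) * ((d : ℚ) - 2) + 1))
    ∧ ((u : ℚ) + 1 < ((d : ℚ) - 1) / 2 →
        (n : ℚ) * ((u : ℚ) + 1)
          ≤ ∑ B ∈ P.parts,
              (if B.card = 1 then (u : ℚ) + 1 else ((B.card : ℚ) - 1) * ((d : ℚ) - 2) + 1)) := by
  have hd3 : (3:ℚ) ≤ (d:ℚ) := by exact_mod_cast hd
  have hu0 : (0:ℚ) ≤ (u:ℚ) := by exact_mod_cast hu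
  have hsum : ∑ B ∈ P.parts, ((B.card : ℚ)) = (n : ℚ) := by
    have := P.sum_card_parts
    have h2 : ∑ B ∈ P.parts, B.card = n := by simpa using this
    exact_mod_cast h2
  have hcard2 : ∀ B ∈ P.parts, B.card ≠ 1 → 2 ≤ B.card := by
    intro B hB h1
    have := P.nonempty_of_mem_parts hB
    have : 1 ≤ B.card := Finset.card_pos.mpr this
    omega
  have key : ∀ B ∈ P.parts,
      (B.card : ℚ) * ((d:ℚ) - 1) / 2 + (if B.card = 1 then ((u:ℚ)+1-((d:ℚ)-1)/2) else 0)
        ≤ (if B.card = 1 then (u:ℚ)+1 else ((B.card:ℚ)-1)*((d:ℚ)-2)+1) := by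
    intro B hB
    by_cases h1 : B.card = 1
    · simp [h1]
    · have hm : (2:ℚ) ≤ (B.card:ℚ) := by exact_mod_cast hcard2 B hB h1
      simp only [h1, if_false]
      nlinarith [mul_nonneg (by linarith : (0:ℚ) ≤ (B.card:ℚ)-2)
        (by linarith : (0:ℚ) ≤ (d:ℚ)-3)]
  have hsfilter : ∑ B ∈ P.parts, (if B.card = 1 then ((u:ℚ)+1-((d:ℚ)-1)/2) else 0)
      = (s:ℚ) * ((u:ℚ)+1-((d:ℚ)-1)/2) := by
    rw [← Finset.sum_filter, Finset.sum_const, hs, nsmul_eq_mul]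
  have hmain : (n : ℚ) * ((d : ℚ) - 1) / 2 + (s : ℚ) * ((u : ℚ) + 1 - ((d : ℚ) - 1) / 2)
      ≤ ∑ B ∈ P.parts,
          (if B.card = 1 then (u : ℚ) + 1 else ((B.card : ℚ) - 1) * ((d : ℚ) - 2) + 1) := by
    calc (n : ℚ) * ((d : ℚ) - 1) / 2 + (s : ℚ) * ((u : ℚ) + 1 - ((d : ℚ) - 1) / 2)
        = ∑ B ∈ P.parts, ((B.card : ℚ) * ((d:ℚ) - 1) / 2
            + (if B.card = 1 then ((u:ℚ)+1-((d:ℚ)-1)/2) else 0)) := by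
          rw [Finset.sum_add_distrib, hsfilter]
          congr 1
          rw [← Finset.sum_div, ← Finset.sum_mul, hsum]
      _ ≤ _ := Finset.sum_le_sum key
  refine ⟨hmain, fun h => ?_, fun h => ?_⟩
  · have : (0:ℚ) ≤ (s:ℚ) * ((u:ℚ)+1-((d:ℚ)-1)/2) :=
      mul_nonneg (Nat.cast_nonneg s) (by linarith)
    linarith
  · have key3 : ∀ B ∈ P.parts, (B.card : ℚ) * ((u:ℚ)+1)
        ≤ (if B.card = 1 then (u:ℚ)+1 else ((B.card:ℚ)-1)*((d:ℚ)-2)+1) := by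
      intro B hB
      by_cases h1 : B.card = 1
      · simp [h1]
      · have hm : (2:ℚ) ≤ (B.card:ℚ) := by exact_mod_cast hcard2 B hB h1
        simp only [h1, if_false]
        nlinarith [mul_nonneg (by linarith : (0:ℚ) ≤ (B.card:ℚ)-2)
          (by linarith : (0:ℚ) ≤ (d:ℚ)-3)]
    calc (n:ℚ) * ((u:ℚ)+1) = ∑ B ∈ P.parts, (B.card : ℚ) * ((u:ℚ)+1) := by
          rw [← Finset.sum_mul, hsum]
      _ ≤ _ := Finset.sum_le_sum key3
end

section
/- For an FI-module V over ℤ and a finite set T with |T| = n, the FI-homology groups of V at T are computed by the chain complex S_• with S_p = ⊕_{S ⊆ T, |S| = n−p} V(S) and differential d(x_S) = Σ_{i ∉ S} (−1)^{ε(S,i)} V(S ↪ S ∪ {i})(x_S) for a suitable sign ε. In particular the zeroth homology of this complex is H₀(V)(T) = coker(⊕_{S⊊T, |S|=n−1} V(S) → V(T)). -/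
/-!
A proper subset `S ⊊ T` lies in `T \ {t}` for some `t ∈ T`, and by functoriality
`V(S) → V(T)` factors through `V(T \ {t})`. Hence the images of the proper subsets and the
images of the codimension-one subsets generate the same subgroup of `V(T)`, and the map
between the two quotients is the identity.
-/

/-- The canonical embedding `↥S ↪ ↥T` induced by an inclusion `S ⊆ T` of finite sets. -/
def inclEmb {α : Type*} {S T : Finset α} (h : S ⊆ T) : ↥S ↪ ↥T :=
  ⟨fun x => ⟨x.1, h x.2⟩, fun a b hab => by cases a; cases b; simpa using hab⟩

/-- An FI-module: a functor from finite sets (here: finite subsets of `ℕ`)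
and injections to abelian groups. -/
structure FISystem where
  obj : Finset ℕ → AddCommGrpCat
  map : ∀ {S T : Finset ℕ}, (↥S ↪ ↥T) → (obj S →+ obj T)
  map_id : ∀ S : Finset ℕ, map (Function.Embedding.refl ↥S) = AddMonoidHom.id _
  map_comp : ∀ {S T U : Finset ℕ} (f : ↥S ↪ ↥T) (g : ↥T ↪ ↥U),
    map (f.trans g) = (map g).comp (map f)

theorem inclEmb_trans {α : Type*} {R S T : Finset α} (hRS : R ⊆ S) (hST : S ⊆ T) :
    (inclEmb hRS).trans (inclEmb hST) = inclEmb (hRS.trans hST) :=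
  rfl

namespace FISystem

variable (V : FISystem)

theorem range_map_inclEmb_le {R S T : Finset ℕ} (hRS : R ⊆ S) (hST : S ⊆ T) :
    (V.map (inclEmb (hRS.trans hST))).range ≤ (V.map (inclEmb hST)).range := by
  rw [← inclEmb_trans hRS hST, V.map_comp, AddMonoidHom.range_comp]
  exact AddSubgroup.map_le_range _ _

theorem iSup_range_ssubset_le_iSup_range_codim_one (T : Finset ℕ) :
    ⨆ (S : Finset ℕ) (h : S ⊂ T), (V.map (inclEmb h.subset)).range ≤
      ⨆ (S : Finset ℕ) (h : S ⊆ T ∧ S.card + 1 = T.card), (V.map (inclEmb h.1)).range := by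
  refine iSup₂_le fun S hS => ?_
  obtain ⟨t, htT, hSt⟩ := Finset.ssubset_iff_exists_subset_erase.1 hS
  have hcodim : T.erase t ⊆ T ∧ (T.erase t).card + 1 = T.card :=
    ⟨T.erase_subset t, Finset.card_erase_add_one htT⟩
  exact (V.range_map_inclEmb_le hSt hcodim.1).trans (le_iSup₂_of_le (T.erase t) hcodim le_rfl)

end FISystem

theorem QuotientAddGroup.map_id_bijective_of_le {G : Type*} [AddGroup G] {M N : AddSubgroup G}
    [M.Normal] [N.Normal] (hMN : M ≤ N.comap (AddMonoidHom.id G)) (hNM : N ≤ M) :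
    Function.Bijective (QuotientAddGroup.map M N (AddMonoidHom.id G) hMN) := by
  obtain rfl : M = N := le_antisymm hMN hNM
  convert Function.bijective_id
  ext x
  exact QuotientAddGroup.map_id_apply M hMN x

/-- Degree-zero part of the complex computing FI-homology: for an FI-module `V` over `ℤ`
and a finite set `T` with `|T| = n`, the natural map from the cokernel of
`⊕_{S ⊆ T, |S| = n-1} V(S) → V(T)` to the cokernel `H₀(V)(T)` of
`⊕_{S ⊊ T} V(S) → V(T)` is an isomorphism: it suffices to quotient by the images
from codimension-one subsets. -/
theorem stmt12 (V : FISystem) (T : Finset ℕ) :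
    Function.Bijective
      (QuotientAddGroup.map
        (⨆ (S : Finset ℕ) (h : S ⊆ T ∧ S.card + 1 = T.card), (V.map (inclEmb h.1)).range)
        (⨆ (S : Finset ℕ) (h : S ⊂ T), (V.map (inclEmb h.subset)).range)
        (AddMonoidHom.id _)
        (by
          rw [AddSubgroup.comap_id]
          refine iSup_le fun S => iSup_le fun h => ?_
          have hne : S ≠ T := by
            intro e
            subst e
            omega
          have hlt : S ⊂ T := h.1.ssubset_of_ne hne
          exact le_iSup_of_le S (le_iSup_of_le hlt le_rfl))) :=
  QuotientAddGroup.map_id_bijective_of_le _ (V.iSup_range_ssubset_le_iSup_range_codim_one T)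
end

section
/- Let G be a group and S a finite set. Consider the category D whose objects are pairs (T, u) with T a finite set and u: S × G → T × G a G-equivariant injection, and whose morphisms (T,u) → (T',u') are injections φ: T → T' with (φ × id_G) ∘ u = u'. Then D is the disjoint union, over functions f: S → G, of full subcategories D^f (those (T,u) with û = f, where û(s) = p_G(u(s,1))), each of which has an initial object given by (S, u_f) with u_f(s,g) = (s, g·f(s)); moreover there are no morphisms between D^f and D^g for f ≠ g. -/
/-- Equivariance of `u : S × G → T × G` for the `G`-action on the `G`-coordinate. -/
def IsEquivariant {G : Type} [Group G] {S T : Type} (u : S × G → T × G) : Prop :=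
  ∀ (s : S) (g h : G), u (s, h * g) = ((u (s, g)).1, h * (u (s, g)).2)

/-- The function `û : S → G` determined by a `G`-equivariant injection
`u : S × G → T × G`, `û(s) = p_G(u(s,1))`. -/
def hat {G : Type} [Group G] {S T : Type} (u : S × G → T × G) : S → G :=
  fun s => (u (s, 1)).2

/-- Consider the category `D` whose objects are pairs `(T, u)` with `T` a finite set and
`u : S × G → T × G` a `G`-equivariant injection, and whose morphisms `(T,u) → (T',u')`
are injections `φ : T → T'` with `(φ × id) ∘ u = u'`.  Then:
(1) a morphism `(T,u) → (T',u')` forces `û = û'`; hence `D` is the disjoint union over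
`f : S → G` of the full subcategories `D^f = {(T,u) : û = f}`, with no morphisms
between `D^f` and `D^g` for `f ≠ g`; and
(2) each `D^f` has an initial object `(S, u_f)` with `u_f(s,g) = (s, g·f(s))`: for every
`(T, u)` in `D^f` there is a unique morphism `(S, u_f) → (T, u)`. -/
theorem stmt15 (G : Type) [Group G] (S : Type) [Fintype S] :
    (∀ (T T' : Type) [Fintype T] [Fintype T']
        (u : S × G → T × G) (u' : S × G → T' × G),
      Function.Injective u → IsEquivariant u →
      Function.Injective u' → IsEquivariant u' →
      ∀ φ : T → T', Function.Injective φ →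
        (∀ p : S × G, Prod.map φ id (u p) = u' p) →
        hat u = hat u')
    ∧ (∀ (f : S → G) (T : Type) [Fintype T] (u : S × G → T × G),
        Function.Injective u → IsEquivariant u → hat u = f →
        ∃! φ : S → T, Function.Injective φ ∧
          ∀ (s : S) (g : G), Prod.map φ id ((s, g * f s) : S × G) = u (s, g)) := by
  constructor
  · intro T T' _ _ u u' _ _ _ _ φ _ hcomm
    funext s
    have := hcomm (s, 1)
    simp [hat, ← this, Prod.map]
  · intro f T _ u hinj heq hhat
    have key : ∀ s g, u (s, g) = ((u (s, 1)).1, g * f s) := by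
      intro s g
      have := heq s 1 g
      rw [mul_one] at this
      rw [this, ← hhat]; rfl
    refine ⟨fun s => (u (s, 1)).1, ⟨?_, ?_⟩, ?_⟩
    · intro s s' h
      simp only at h
      have : u (s, (f s)⁻¹) = u (s', (f s')⁻¹) := by
        rw [key s ((f s)⁻¹), key s' ((f s')⁻¹), h]; simp
      exact (Prod.ext_iff.1 (hinj this)).1
    · intro s g
      rw [key]; rfl
    · intro φ' ⟨_, hφ'⟩
      funext s
      have := hφ' s 1
      rw [key] at this
      simpa [Prod.map] using this
end
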